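/- The number of isomeric classes of rooted trees of order exactly 5 is 8 (i.e., the 9 rooted trees of order 5 fall into 8 classes under the relation of having equal atomic-stump multisets), and exactly one class contains more than one tree, namely a class with 2 trees. -/

import Mathlib

/-!
Every rooted tree of order `n + 1` is `node f` for a planar forest `f` of order `n`, and planar
forests are enumerated by splitting off their first tree. Of the 14 planar forests of order 4,
nine give pairwise non-isomorphic trees, separated by the order-blind invariant `code 3`, and the
other five are rearrangements of these. Among the nine, only `[τ, [[τ]]]` and `[[τ, [τ]]]` have
the same atomic stumps, `s₁₁ s₀₁ s₁₀`.
-/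

/-- Unordered rooted trees, represented as planar trees (lists of subtrees);
unordered identification is via the isomorphism relation `RTree.Iso`. -/
inductive RTree where
  | node : List RTree → RTree

namespace RTree

/-- The single-vertex tree τ. -/
def leaf : RTree := .node []

def isLeaf : RTree → Bool
  | .node [] => true
  | _ => false

/-- The order |t|: number of vertices. -/
def order : RTree → ℕ
  | .node l => 1 + (l.attach.map (fun t => order t.1)).sum
decreasing_by
  have := List.sizeOf_lt_of_mem t.2
  simp only [RTree.node.sizeOf_spec]
  omega

/-- Isomorphism of planar rooted trees: the lists of children agree up to
permutation and recursive isomorphism. -/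
inductive Iso : RTree → RTree → Prop
  | node {l₁ l₂ : List RTree} (l : List RTree) :
      List.Perm l₁ l → List.Forall₂ Iso l l₂ → Iso (.node l₁) (.node l₂)

end RTree

namespace RTree

/-- The multiset of atomic stumps of a tree: for each internal vertex we record
the pair (number of leaf children, number of non-leaf children). -/
def stumps : RTree → Multiset (ℕ × ℕ)
  | .node l =>
      (l.countP isLeaf, l.countP (fun t => !isLeaf t)) ::ₘ
        (l.attach.map (fun t => if isLeaf t.1 then (0 : Multiset (ℕ × ℕ)) else stumps t.1)).sum
decreasing_by
  have := List.sizeOf_lt_of_mem t.2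
  simp only [RTree.node.sizeOf_spec]
  omega

theorem order_node (l : List RTree) : order (node l) = 1 + (l.map order).sum := by
  rw [order, List.attach_map_val]

theorem stumps_node (l : List RTree) :
    stumps (node l) = (l.countP isLeaf, l.countP (fun t => !isLeaf t)) ::ₘ
      (l.map fun t => if isLeaf t then 0 else stumps t).sum := by
  rw [stumps, List.attach_map_val (f := fun t => if isLeaf t then 0 else stumps t)]

mutual

theorem Iso.refl : (t : RTree) → Iso t t
  | .node l => .node l (.refl l) (Iso.forall₂_refl l)

theorem Iso.forall₂_refl : (l : List RTree) → List.Forall₂ Iso l l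
  | [] => .nil
  | t :: l => .cons (Iso.refl t) (Iso.forall₂_refl l)

end

theorem Iso.of_perm {l₁ l₂ : List RTree} (h : l₁.Perm l₂) : Iso (.node l₁) (.node l₂) :=
  .node l₂ h (Iso.forall₂_refl l₂)

def code (b : ℕ) : RTree → ℕ
  | node l => (l.attach.map fun t => b ^ code b t.1).sum
decreasing_by
  have := List.sizeOf_lt_of_mem t.2
  simp only [RTree.node.sizeOf_spec]
  omega

theorem code_node (b : ℕ) (l : List RTree) :
    code b (node l) = (l.map fun t => b ^ code b t).sum := by
  rw [code, List.attach_map_val (f := fun t => b ^ code b t)]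

mutual

theorem Iso.code_eq {b : ℕ} : {t₁ t₂ : RTree} → Iso t₁ t₂ → code b t₁ = code b t₂
  | _, _, .node _ hp hf => by
    rw [code_node, code_node, (hp.map _).sum_eq, Iso.map_pow_code_eq hf]

theorem Iso.map_pow_code_eq {b : ℕ} : {l₁ l₂ : List RTree} → List.Forall₂ Iso l₁ l₂ →
    l₁.map (fun t => b ^ code b t) = l₂.map (fun t => b ^ code b t)
  | _, _, .nil => rfl
  | _, _, .cons h hs => by rw [List.map_cons, List.map_cons, h.code_eq, Iso.map_pow_code_eq hs]

end

def forests : ℕ → List (List RTree)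
  | 0 => [[]]
  | n + 1 => (List.finRange (n + 1)).flatMap fun k : Fin (n + 1) =>
      (forests k).flatMap fun f => (forests (n - k)).map (node f :: ·)
decreasing_by all_goals omega

theorem mem_forests : (l : List RTree) → l ∈ forests (l.map order).sum
  | [] => by simp [forests]
  | node f :: g => by
    have hsum : ((node f :: g).map order).sum = (f.map order).sum + (g.map order).sum + 1 := by
      simp only [List.map_cons, List.sum_cons, order_node]
      omega
    rw [hsum, forests, List.mem_flatMap]
    refine ⟨⟨(f.map order).sum, by omega⟩, List.mem_finRange _,
      List.mem_flatMap.mpr ⟨f, mem_forests f, ?_⟩⟩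
    simpa using mem_forests g

local notation "τ" => leaf

theorem forests_four : forests 4 =
    [[τ, τ, τ, τ], [τ, τ, node [τ]], [τ, node [τ], τ], [τ, node [τ, τ]], [τ, node [node [τ]]],
      [node [τ], τ, τ], [node [τ], node [τ]], [node [τ, τ], τ], [node [node [τ]], τ],
      [node [τ, τ, τ]], [node [τ, node [τ]]], [node [node [τ], τ]], [node [node [τ, τ]]],
      [node [node [node [τ]]]]] := by
  simp [forests, List.finRange_succ, leaf]

def orderFiveReps : List RTree :=
  [node [τ, τ, τ, τ], node [τ, τ, node [τ]], node [τ, node [τ, τ]], node [τ, node [node [τ]]],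
    node [node [τ], node [τ]], node [node [τ, τ, τ]], node [node [τ, node [τ]]],
    node [node [node [τ, τ]]], node [node [node [node [τ]]]]]

theorem order_eq_five_of_mem_orderFiveReps : ∀ t ∈ orderFiveReps, order t = 5 := by
  simp [orderFiveReps, order_node, leaf]

theorem exists_mem_orderFiveReps_iso {t : RTree} (ht : order t = 5) :
    ∃ r ∈ orderFiveReps, Iso t r := by
  obtain ⟨l⟩ := t
  have hl : l ∈ forests 4 := by
    have hsum : (l.map order).sum = 4 := by
      rw [order_node] at ht
      omega
    exact hsum ▸ mem_forests l
  rw [forests_four] at hl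
  simp only [List.mem_cons, List.not_mem_nil, or_false] at hl
  rcases hl with rfl | rfl | rfl | rfl | rfl | rfl | rfl | rfl | rfl | rfl | rfl | rfl | rfl | rfl
  all_goals try (refine ⟨_, ?_, .refl _⟩; simp [orderFiveReps, leaf]; done)
  · exact ⟨node [τ, τ, node [τ]], by simp [orderFiveReps], .of_perm (.cons _ (.swap _ _ _))⟩
  · exact ⟨node [τ, τ, node [τ]], by simp [orderFiveReps],
      .of_perm (List.perm_append_comm (l₁ := [node [τ]]) (l₂ := [τ, τ]))⟩
  · exact ⟨node [τ, node [τ, τ]], by simp [orderFiveReps], .of_perm (.swap _ _ _)⟩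
  · exact ⟨node [τ, node [node [τ]]], by simp [orderFiveReps], .of_perm (.swap _ _ _)⟩
  · exact ⟨node [node [τ, node [τ]]], by simp [orderFiveReps],
      .node _ (.refl _) (.cons (.of_perm (.swap _ _ _)) .nil)⟩

theorem orderFiveReps_pairwise_not_iso : orderFiveReps.Pairwise fun a b => ¬ Iso a b := by
  have hcode : orderFiveReps.map (code 3) = [4, 5, 10, 28, 6, 27, 81, 19683, 7625597484987] := by
    simp [orderFiveReps, code_node, leaf]
  have hne : (orderFiveReps.map (code 3)).Pairwise (· ≠ ·) := by
    rw [hcode]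
    decide
  exact (List.pairwise_map.mp hne).imp fun hne hiso => hne hiso.code_eq

theorem map_stumps_orderFiveReps : orderFiveReps.map stumps =
    [{(4, 0)}, {(2, 1), (1, 0)}, {(1, 1), (2, 0)}, {(1, 1), (0, 1), (1, 0)},
      {(0, 2), (1, 0), (1, 0)}, {(0, 1), (3, 0)}, {(0, 1), (1, 1), (1, 0)},
      {(0, 1), (0, 1), (2, 0)}, {(0, 1), (0, 1), (0, 1), (1, 0)}] := by
  simp [orderFiveReps, stumps_node, leaf, isLeaf, List.countP_cons]

end RTree

theorem List.count_le_of_forall_mem_count_le {α : Type*} [DecidableEq α] {l : List α} {k : ℕ}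
    (h : ∀ a ∈ l, l.count a ≤ k) (a : α) : l.count a ≤ k := by
  by_cases ha : a ∈ l
  · exact h a ha
  · rw [List.count_eq_zero.mpr ha]
    exact k.zero_le

theorem List.existsUnique_count_eq {α : Type*} [DecidableEq α] {l : List α} {k : ℕ} (hk : k ≠ 0)
    {a : α} (ha : l.count a = k) (h : ∀ b ∈ l, l.count b = k → b = a) : ∃! b, l.count b = k :=
  ⟨a, ha, fun b hb => h b (List.count_pos_iff.mp (by omega)) hb⟩

/-- The 9 rooted trees of order 5 fall into 8 isomeric classes (classes of equal
atomic-stump multisets); exactly one class has more than one tree, with 2 trees. -/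
theorem isomeric_classes_order_five :
    ∃ reps : List RTree, reps.length = 9 ∧
      (∀ t ∈ reps, RTree.order t = 5) ∧
      reps.Pairwise (fun a b => ¬ RTree.Iso a b) ∧
      (∀ t : RTree, RTree.order t = 5 → ∃ r ∈ reps, RTree.Iso t r) ∧
      (reps.map RTree.stumps).dedup.length = 8 ∧
      (∀ m : Multiset (ℕ × ℕ), (reps.map RTree.stumps).count m ≤ 2) ∧
      (∃! m : Multiset (ℕ × ℕ), (reps.map RTree.stumps).count m = 2) := by
  refine ⟨RTree.orderFiveReps, rfl, RTree.order_eq_five_of_mem_orderFiveReps,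
    RTree.orderFiveReps_pairwise_not_iso, fun _ => RTree.exists_mem_orderFiveReps_iso, ?_,
    List.count_le_of_forall_mem_count_le ?_,
    List.existsUnique_count_eq two_ne_zero (a := {(1, 1), (0, 1), (1, 0)}) ?_ ?_⟩ <;>
  · rw [RTree.map_stumps_orderFiveReps]
    decide
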